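/- arXiv:1909.02227 — 7 statements merged into one kernel-verified Lean document; each statement's English description precedes it below -/
import Mathlib

section
/- Pairwise spectral decomposition of the Lyapunov solution: if A is Hurwitz and Q ∈ ℂ^{n×n}, then conj(λ_i) + λ_j ≠ 0 for all i,j, and the matrix P := −∑_{i,j=1}^n R_iᴴ Q R_j/(conj(λ_i) + λ_j) satisfies the Lyapunov equation Aᴴ P + P A = −Q. -/
open Matrix BigOperators

/-- The residue matrix `R_i = u_i v_iᵀ`, with entries `(R_i)_{kl} = U_{ki} V_{il}`. -/
noncomputable def residue {n : ℕ} (U V : Matrix (Fin n) (Fin n) ℂ) (i : Fin n) :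
    Matrix (Fin n) (Fin n) ℂ :=
  Matrix.vecMulVec (fun k => U k i) (fun l => V i l)

/-- Pairwise spectral decomposition of the Lyapunov solution: if `A` is Hurwitz then
`conj(λ_i) + λ_j ≠ 0` for all `i, j`, and
`P := −∑_{i,j} R_iᴴ Q R_j / (conj(λ_i) + λ_j)` satisfies `Aᴴ P + P A = −Q`. -/
theorem lyapunov_pairwise_spectral_decomposition
    (n : ℕ) (hn : 1 ≤ n)
    (A U V : Matrix (Fin n) (Fin n) ℂ) (lam : Fin n → ℂ)
    (hUV : U * V = 1) (hVU : V * U = 1)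
    (hA : A = U * Matrix.diagonal lam * V)
    (hHur : ∀ i, (lam i).re < 0)
    (Q : Matrix (Fin n) (Fin n) ℂ) :
    (∀ i j, starRingEnd ℂ (lam i) + lam j ≠ 0) ∧
      Aᴴ * (-∑ i, ∑ j, (starRingEnd ℂ (lam i) + lam j)⁻¹ •
            ((residue U V i)ᴴ * Q * residue U V j)) +
        (-∑ i, ∑ j, (starRingEnd ℂ (lam i) + lam j)⁻¹ •
            ((residue U V i)ᴴ * Q * residue U V j)) * A = -Q := by
  have hne : ∀ i j, starRingEnd ℂ (lam i) + lam j ≠ 0 := by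
    intro i j h
    have h1 := hHur i
    have h2 := hHur j
    have : (starRingEnd ℂ (lam i) + lam j).re < 0 := by
      simp only [Complex.add_re, Complex.conj_re]
      linarith
    rw [h] at this
    simp at this
  refine ⟨hne, ?_⟩
  have hsum : ∑ i, residue U V i = 1 := by
    rw [← hUV]; ext k l
    simp [residue, Matrix.vecMulVec_apply, Matrix.mul_apply, Matrix.sum_apply]
  have hVA : V * A = Matrix.diagonal lam * V := by
    rw [hA, ← Matrix.mul_assoc, ← Matrix.mul_assoc, hVU, Matrix.one_mul]
  have hRA : ∀ j, residue U V j * A = lam j • residue U V j := by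
    intro j
    ext k l
    have h1 : (residue U V j * A) k l = U k j * (V * A) j l := by
      simp [residue, Matrix.mul_apply, Matrix.vecMulVec_apply, Finset.mul_sum, mul_assoc]
    rw [h1, hVA]
    simp [residue, Matrix.mul_apply, Matrix.diagonal_apply, Matrix.vecMulVec_apply,
      Finset.mul_sum]
    ring
  have hAR : ∀ i, Aᴴ * (residue U V i)ᴴ = (starRingEnd ℂ (lam i)) • (residue U V i)ᴴ := by
    intro i
    have := congrArg Matrix.conjTranspose (hRA i)
    rwa [Matrix.conjTranspose_mul, Matrix.conjTranspose_smul] at this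
  have key : ∀ i j, Aᴴ * ((starRingEnd ℂ (lam i) + lam j)⁻¹ •
        ((residue U V i)ᴴ * Q * residue U V j)) +
      ((starRingEnd ℂ (lam i) + lam j)⁻¹ •
        ((residue U V i)ᴴ * Q * residue U V j)) * A =
      (residue U V i)ᴴ * Q * residue U V j := by
    intro i j
    rw [Matrix.mul_smul, Matrix.smul_mul]
    have h1 : Aᴴ * ((residue U V i)ᴴ * Q * residue U V j) =
        (starRingEnd ℂ (lam i)) • ((residue U V i)ᴴ * Q * residue U V j) := by
      rw [← Matrix.mul_assoc, ← Matrix.mul_assoc, hAR, Matrix.smul_mul, Matrix.smul_mul]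
    have h2 : ((residue U V i)ᴴ * Q * residue U V j) * A =
        (lam j) • ((residue U V i)ᴴ * Q * residue U V j) := by
      rw [Matrix.mul_assoc, hRA, Matrix.mul_smul]
    rw [h1, h2, smul_smul, smul_smul, ← add_smul, ← mul_add,
      inv_mul_cancel₀ (hne i j), one_smul]
  have hQ : ∑ i, ∑ j, (residue U V i)ᴴ * Q * residue U V j = Q := by
    have : ∀ i, ∑ j, (residue U V i)ᴴ * Q * residue U V j = (residue U V i)ᴴ * Q := by
      intro i
      rw [← Matrix.mul_sum, hsum, Matrix.mul_one]
    simp_rw [this, ← Matrix.sum_mul, ← Matrix.conjTranspose_sum, hsum,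
      Matrix.conjTranspose_one, Matrix.one_mul]
  rw [Matrix.mul_neg, Matrix.neg_mul, ← neg_add, Matrix.mul_sum, Matrix.sum_mul,
    ← Finset.sum_add_distrib, neg_inj]
  calc ∑ i, (Aᴴ * ∑ j, (starRingEnd ℂ (lam i) + lam j)⁻¹ •
          ((residue U V i)ᴴ * Q * residue U V j) +
        (∑ j, (starRingEnd ℂ (lam i) + lam j)⁻¹ •
          ((residue U V i)ᴴ * Q * residue U V j)) * A)
      = ∑ i, ∑ j, (residue U V i)ᴴ * Q * residue U V j := by
        refine Finset.sum_congr rfl fun i _ => ?_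
        rw [Matrix.mul_sum, Matrix.sum_mul, ← Finset.sum_add_distrib]
        exact Finset.sum_congr rfl fun j _ => key i j
    _ = Q := hQ
end

section
/- One-index spectral decomposition of the Lyapunov solution: if A is Hurwitz and Q ∈ ℂ^{n×n}, then for every i the matrix conj(λ_i)I + A is invertible, the identity −∑_{i=1}^n R_iᴴ Q (conj(λ_i)I + A)⁻¹ = −∑_{i,j=1}^n R_iᴴ Q R_j/(conj(λ_i) + λ_j) holds, and consequently the matrix P := −∑_{i=1}^n R_iᴴ Q (conj(λ_i)I + A)⁻¹ satisfies Aᴴ P + P A = −Q. -/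
open Matrix BigOperators

/-- One-index spectral decomposition of the Lyapunov solution: if `A` is Hurwitz then
every matrix `conj(λ_i)I + A` is invertible,
`−∑_i R_iᴴ Q (conj(λ_i)I + A)⁻¹ = −∑_{i,j} R_iᴴ Q R_j / (conj(λ_i) + λ_j)`, and
`P := −∑_i R_iᴴ Q (conj(λ_i)I + A)⁻¹` satisfies `Aᴴ P + P A = −Q`. -/
theorem lyapunov_one_index_spectral_decomposition
    (n : ℕ) (hn : 1 ≤ n)
    (A U V : Matrix (Fin n) (Fin n) ℂ) (lam : Fin n → ℂ)
    (hUV : U * V = 1) (hVU : V * U = 1)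
    (hA : A = U * Matrix.diagonal lam * V)
    (hHur : ∀ i, (lam i).re < 0)
    (Q : Matrix (Fin n) (Fin n) ℂ) :
    (∀ i, IsUnit (starRingEnd ℂ (lam i) • (1 : Matrix (Fin n) (Fin n) ℂ) + A)) ∧
      (-∑ i, (residue U V i)ᴴ * Q *
          (starRingEnd ℂ (lam i) • (1 : Matrix (Fin n) (Fin n) ℂ) + A)⁻¹) =
        (-∑ i, ∑ j, (starRingEnd ℂ (lam i) + lam j)⁻¹ •
            ((residue U V i)ᴴ * Q * residue U V j)) ∧
      Aᴴ * (-∑ i, (residue U V i)ᴴ * Q *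
            (starRingEnd ℂ (lam i) • (1 : Matrix (Fin n) (Fin n) ℂ) + A)⁻¹) +
        (-∑ i, (residue U V i)ᴴ * Q *
            (starRingEnd ℂ (lam i) • (1 : Matrix (Fin n) (Fin n) ℂ) + A)⁻¹) * A = -Q := by
  set c : Fin n → ℂ := fun i => starRingEnd ℂ (lam i) with hc
  -- nonvanishing of conj λᵢ + λⱼ
  have hne : ∀ i j, c i + lam j ≠ 0 := by
    intro i j h
    have hre : (c i + lam j).re = (lam i).re + (lam j).re := by
      simp [hc, Complex.add_re]
    rw [h] at hre
    simp at hre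
    linarith [hHur i, hHur j]
  -- UDV product formula
  have hUDV : ∀ d : Fin n → ℂ, U * Matrix.diagonal d * V = ∑ j, d j • residue U V j := by
    intro d
    ext k l
    simp only [Matrix.mul_apply, Matrix.sum_apply, Matrix.smul_apply,
      residue, Matrix.vecMulVec_apply, smul_eq_mul, Matrix.diagonal_apply, mul_ite, mul_zero,
      ite_mul, zero_mul, Finset.sum_ite_eq', Finset.mem_univ, if_true]
    exact Finset.sum_congr rfl (fun m _ => by ring)
  -- the shifted matrix as a UDV form
  have hconst : ∀ x : ℂ, Matrix.diagonal (fun _ : Fin n => x) = x • (1 : Matrix (Fin n) (Fin n) ℂ) := by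
    intro x
    ext k l
    by_cases h : k = l <;> simp [Matrix.diagonal, Matrix.one_apply, h]
  have hM : ∀ i, c i • (1 : Matrix (Fin n) (Fin n) ℂ) + A
      = U * Matrix.diagonal (fun j => c i + lam j) * V := by
    intro i
    have : Matrix.diagonal (fun j => c i + lam j)
        = Matrix.diagonal (fun _ : Fin n => c i) + Matrix.diagonal lam := by
      rw [← Matrix.diagonal_add]
    rw [this, Matrix.mul_add, Matrix.add_mul, hconst, hA]
    congr 1
    rw [Matrix.mul_smul, Matrix.mul_one, Matrix.smul_mul, hUV]
  -- product of two UDV forms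
  have hUDVmul : ∀ d e : Fin n → ℂ,
      (U * Matrix.diagonal d * V) * (U * Matrix.diagonal e * V)
        = U * Matrix.diagonal (fun j => d j * e j) * V := by
    intro d e
    calc (U * Matrix.diagonal d * V) * (U * Matrix.diagonal e * V)
        = U * Matrix.diagonal d * (V * U) * (Matrix.diagonal e * V) := by
          noncomm_ring
      _ = U * (Matrix.diagonal d * Matrix.diagonal e) * V := by
          rw [hVU, Matrix.mul_one]; noncomm_ring
      _ = U * Matrix.diagonal (fun j => d j * e j) * V := by
          rw [Matrix.diagonal_mul_diagonal]
  have hid : U * Matrix.diagonal (fun _ : Fin n => (1:ℂ)) * V = 1 := by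
    rw [hconst, one_smul, Matrix.mul_one, hUV]
  -- invertibility
  have hMN : ∀ i, (c i • (1 : Matrix (Fin n) (Fin n) ℂ) + A) *
      (U * Matrix.diagonal (fun j => (c i + lam j)⁻¹) * V) = 1 := by
    intro i
    rw [hM i, hUDVmul]
    rw [show (fun j => (c i + lam j) * (c i + lam j)⁻¹) = fun _ : Fin n => (1:ℂ) from
      funext fun j => mul_inv_cancel₀ (hne i j)]
    exact hid
  have hNM : ∀ i, (U * Matrix.diagonal (fun j => (c i + lam j)⁻¹) * V) *
      (c i • (1 : Matrix (Fin n) (Fin n) ℂ) + A) = 1 := by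
    intro i
    rw [hM i, hUDVmul]
    rw [show (fun j => (c i + lam j)⁻¹ * (c i + lam j)) = fun _ : Fin n => (1:ℂ) from
      funext fun j => inv_mul_cancel₀ (hne i j)]
    exact hid
  have hUnit : ∀ i, IsUnit (c i • (1 : Matrix (Fin n) (Fin n) ℂ) + A) := by
    intro i
    exact ⟨⟨_, _, hMN i, hNM i⟩, rfl⟩
  have hMinv : ∀ i, (c i • (1 : Matrix (Fin n) (Fin n) ℂ) + A)⁻¹
      = U * Matrix.diagonal (fun j => (c i + lam j)⁻¹) * V := by
    intro i
    exact Matrix.inv_eq_right_inv (hMN i)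
  have hMinvSum : ∀ i, (c i • (1 : Matrix (Fin n) (Fin n) ℂ) + A)⁻¹
      = ∑ j, (c i + lam j)⁻¹ • residue U V j := by
    intro i; rw [hMinv i, hUDV]
  -- part 2
  have part2 : (-∑ i, (residue U V i)ᴴ * Q *
          (c i • (1 : Matrix (Fin n) (Fin n) ℂ) + A)⁻¹) =
        (-∑ i, ∑ j, (c i + lam j)⁻¹ •
            ((residue U V i)ᴴ * Q * residue U V j)) := by
    congr 1
    refine Finset.sum_congr rfl fun i _ => ?_
    rw [hMinvSum i, Finset.mul_sum]
    refine Finset.sum_congr rfl fun j _ => ?_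
    rw [Matrix.mul_smul, Matrix.mul_assoc]
  -- Rᵢ A = λᵢ Rᵢ
  have hVA : V * A = Matrix.diagonal lam * V := by
    rw [hA, ← Matrix.mul_assoc, ← Matrix.mul_assoc, hVU, Matrix.one_mul]
  have hRA : ∀ i, residue U V i * A = lam i • residue U V i := by
    intro i
    ext k l
    have h1 : (V * A) i l = lam i * V i l := by
      rw [hVA]; simp [Matrix.diagonal_mul]
    have h2 : (residue U V i * A) k l = U k i * (V * A) i l := by
      simp only [Matrix.mul_apply, residue, Matrix.vecMulVec_apply, Finset.mul_sum]
      exact Finset.sum_congr rfl (fun m _ => by ring)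
    rw [h2, h1]
    simp [residue, Matrix.vecMulVec_apply]
    ring
  have hAHR : ∀ i, Aᴴ * (residue U V i)ᴴ = c i • (residue U V i)ᴴ := by
    intro i
    rw [← Matrix.conjTranspose_mul, hRA i, Matrix.conjTranspose_smul]
    rfl
  have hsumR : ∑ i, residue U V i = 1 := by
    have := hid
    rw [hUDV] at this
    simpa using this
  -- part 3
  have part3 : Aᴴ * (-∑ i, (residue U V i)ᴴ * Q *
            (c i • (1 : Matrix (Fin n) (Fin n) ℂ) + A)⁻¹) +
        (-∑ i, (residue U V i)ᴴ * Q *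
            (c i • (1 : Matrix (Fin n) (Fin n) ℂ) + A)⁻¹) * A = -Q := by
    have key : ∀ i, Aᴴ * ((residue U V i)ᴴ * Q *
          (c i • (1 : Matrix (Fin n) (Fin n) ℂ) + A)⁻¹) +
        ((residue U V i)ᴴ * Q *
          (c i • (1 : Matrix (Fin n) (Fin n) ℂ) + A)⁻¹) * A
        = (residue U V i)ᴴ * Q := by
      intro i
      have hinvM : (c i • (1 : Matrix (Fin n) (Fin n) ℂ) + A)⁻¹ *
          (c i • (1 : Matrix (Fin n) (Fin n) ℂ) + A) = 1 := by
        rw [hMinv i]; exact hNM i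
      calc Aᴴ * ((residue U V i)ᴴ * Q * (c i • (1 : Matrix (Fin n) (Fin n) ℂ) + A)⁻¹) +
            ((residue U V i)ᴴ * Q * (c i • (1 : Matrix (Fin n) (Fin n) ℂ) + A)⁻¹) * A
          = (Aᴴ * (residue U V i)ᴴ) * (Q * (c i • (1 : Matrix (Fin n) (Fin n) ℂ) + A)⁻¹) +
            (residue U V i)ᴴ * Q * ((c i • (1 : Matrix (Fin n) (Fin n) ℂ) + A)⁻¹ * A) := by
            noncomm_ring
        _ = (residue U V i)ᴴ * Q *
              ((c i • (1 : Matrix (Fin n) (Fin n) ℂ) + A)⁻¹ *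
                (c i • (1 : Matrix (Fin n) (Fin n) ℂ) + A)) := by
            rw [hAHR i]
            rw [Matrix.mul_add, Matrix.mul_smul, Matrix.mul_one, Matrix.mul_add]
            rw [Matrix.mul_smul]
            noncomm_ring
        _ = (residue U V i)ᴴ * Q := by rw [hinvM, Matrix.mul_one]
    rw [Matrix.mul_neg, Matrix.neg_mul, ← neg_add]
    rw [Matrix.mul_sum, Matrix.sum_mul, ← Finset.sum_add_distrib]
    rw [Finset.sum_congr rfl fun i _ => key i]
    rw [← Finset.sum_mul]
    rw [show (∑ i, (residue U V i)ᴴ) = (∑ i, residue U V i)ᴴ by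
      rw [Matrix.conjTranspose_sum]]
    rw [hsumR, Matrix.conjTranspose_one, Matrix.one_mul]
  exact ⟨hUnit, part2, part3⟩
end

section
/- Consistency of the one-index and pairwise decompositions: if A is Hurwitz and Q ∈ ℂ^{n×n}, then for each i, the pairwise sub-Gramians sum to the one-index sub-Gramian: ∑_{j=1}^n P_{ij} = P̃_i, where P_{ij} := −{R_iᴴ Q R_j/(conj(λ_i) + λ_j)}_H and P̃_i := −{R_iᴴ Q (conj(λ_i)I + A)⁻¹}_H. -/
open Matrix BigOperators

/-- The Hermitian part `{M}_H = ½(M + Mᴴ)` of a square complex matrix. -/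
noncomputable def hermPart {n : ℕ} (M : Matrix (Fin n) (Fin n) ℂ) :
    Matrix (Fin n) (Fin n) ℂ :=
  (1 / 2 : ℂ) • (M + Mᴴ)

lemma hermPart_sum {n : ℕ} {ι : Type*} (s : Finset ι) (f : ι → Matrix (Fin n) (Fin n) ℂ) :
    hermPart (∑ j ∈ s, f j) = ∑ j ∈ s, hermPart (f j) := by
  simp [hermPart, conjTranspose_sum, Finset.sum_add_distrib, Finset.smul_sum]

lemma sum_smul_residue {n : ℕ} (U V : Matrix (Fin n) (Fin n) ℂ) (w : Fin n → ℂ) :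
    ∑ j, w j • residue U V j = U * Matrix.diagonal w * V := by
  ext k l
  simp [residue, Matrix.mul_apply, Matrix.diagonal, Matrix.vecMulVec,
    Matrix.sum_apply, Finset.mul_sum]
  apply Finset.sum_congr rfl
  intro j _
  ring

/-- Consistency of the one-index and pairwise decompositions: if `A` is Hurwitz and
`Q ∈ ℂ^{n×n}`, then for each `i`, `∑_j P_{ij} = P̃_i`, where
`P_{ij} := −{R_iᴴ Q R_j/(conj(λ_i) + λ_j)}_H` and
`P̃_i := −{R_iᴴ Q (conj(λ_i)I + A)⁻¹}_H`. -/
theorem pairwise_subGramians_sum_to_one_index_subGramian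
    (n : ℕ) (hn : 1 ≤ n)
    (A U V : Matrix (Fin n) (Fin n) ℂ) (lam : Fin n → ℂ)
    (hUV : U * V = 1) (hVU : V * U = 1)
    (hA : A = U * Matrix.diagonal lam * V)
    (hHur : ∀ i, (lam i).re < 0)
    (Q : Matrix (Fin n) (Fin n) ℂ) (i : Fin n) :
    (∑ j, -hermPart ((starRingEnd ℂ (lam i) + lam j)⁻¹ •
        ((residue U V i)ᴴ * Q * residue U V j))) =
      -hermPart ((residue U V i)ᴴ * Q *
        (starRingEnd ℂ (lam i) • (1 : Matrix (Fin n) (Fin n) ℂ) + A)⁻¹) := by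
  set c : ℂ := starRingEnd ℂ (lam i)
  set g : Fin n → ℂ := fun j => c + lam j with hg
  have hgne : ∀ j, g j ≠ 0 := by
    intro j h
    have := congrArg Complex.re h
    simp [hg, c, Complex.add_re] at this
    have h1 := hHur i
    have h2 := hHur j
    linarith
  have hM : c • (1 : Matrix (Fin n) (Fin n) ℂ) + A = U * Matrix.diagonal g * V := by
    have h1 : c • (1 : Matrix (Fin n) (Fin n) ℂ) = U * (c • Matrix.diagonal (fun _ => (1:ℂ))) * V := by
      simp [Matrix.mul_smul, Matrix.smul_mul, hUV]
    rw [h1, hA]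
    rw [← Matrix.add_mul, ← Matrix.mul_add]
    congr 1
    congr 1
    ext k l
    by_cases hkl : k = l <;> simp [Matrix.diagonal, hkl, hg]
  have hinv : (c • (1 : Matrix (Fin n) (Fin n) ℂ) + A)⁻¹ = U * Matrix.diagonal (fun j => (g j)⁻¹) * V := by
    apply Matrix.inv_eq_right_inv
    rw [hM]
    calc U * Matrix.diagonal g * V * (U * Matrix.diagonal (fun j => (g j)⁻¹) * V)
        = U * Matrix.diagonal g * (V * U) * Matrix.diagonal (fun j => (g j)⁻¹) * V := by
          noncomm_ring
      _ = U * (Matrix.diagonal g * Matrix.diagonal (fun j => (g j)⁻¹)) * V := by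
          rw [hVU]; noncomm_ring
      _ = 1 := by
          rw [Matrix.diagonal_mul_diagonal]
          have : (fun j => g j * (g j)⁻¹) = fun _ => (1:ℂ) := by
            funext j; exact mul_inv_cancel₀ (hgne j)
          rw [this, Matrix.diagonal_one, Matrix.mul_one, hUV]
  rw [hinv, ← sum_smul_residue U V (fun j => (g j)⁻¹)]
  rw [Finset.mul_sum]
  simp_rw [mul_smul_comm]
  rw [hermPart_sum, ← Finset.sum_neg_distrib]
end

section
/- Integral representation of the Gramian and output energy: if A is Hurwitz and C ∈ ℂ^{m×n}, then the integral P := ∫₀^∞ exp(Aᴴt) Cᴴ C exp(At) dt converges, the matrix P satisfies the Lyapunov equation Aᴴ P + P A = −Cᴴ C, and for every x₀ ∈ ℂⁿ one has ∫₀^∞ ‖C exp(At) x₀‖² dt = x₀ᴴ P x₀. -/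
/-!
Diagonalising `A = U Λ V` turns the integrand into `Vᴴ X(t) V` with
`X(t)ᵢⱼ = Bᵢⱼ exp((λ̄ᵢ + λⱼ) t)` and `B = Uᴴ Cᴴ C U`. Since `Re (λ̄ᵢ + λⱼ) < 0`, every entry is a
decaying exponential with integral `Qᵢⱼ = -Bᵢⱼ / (λ̄ᵢ + λⱼ)`, so `P = Vᴴ Q V`, and the Lyapunov
equation for `P` reduces to the entrywise identity `λ̄ᵢ Qᵢⱼ + Qᵢⱼ λⱼ = -Bᵢⱼ`. The energy identity
is linearity of the integral applied to `‖C e^{At} x₀‖² = x₀ᴴ e^{Aᴴt} Cᴴ C e^{At} x₀`.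
-/

open Matrix MeasureTheory Set Complex

section Integral

variable {α 𝕜 ι κ : Type*} [MeasurableSpace α] {μ : Measure α} [RCLike 𝕜]
  [Fintype ι] [Fintype κ] {X : α → Matrix ι κ 𝕜}

theorem Matrix.integrable_dotProduct_mulVec (hX : ∀ i j, Integrable (fun a => X a i j) μ)
    (u : ι → 𝕜) (x : κ → 𝕜) : Integrable (fun a => u ⬝ᵥ X a *ᵥ x) μ := by
  simp only [dotProduct, mulVec, Finset.mul_sum]
  exact integrable_finsetSum _ fun i _ => integrable_finsetSum _ fun j _ =>
    ((hX i j).mul_const _).const_mul _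

theorem Matrix.integral_dotProduct_mulVec (hX : ∀ i j, Integrable (fun a => X a i j) μ)
    (u : ι → 𝕜) (x : κ → 𝕜) :
    ∫ a, u ⬝ᵥ X a *ᵥ x ∂μ = u ⬝ᵥ (of fun i j => ∫ a, X a i j ∂μ) *ᵥ x := by
  have hterm : ∀ i j, Integrable (fun a => u i * (X a i j * x j)) μ := fun i j =>
    ((hX i j).mul_const _).const_mul _
  simp only [dotProduct, mulVec, Finset.mul_sum, of_apply]
  rw [integral_finsetSum _ fun i _ => integrable_finsetSum _ fun j _ => hterm i j]
  refine Finset.sum_congr rfl fun i _ => ?_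
  rw [integral_finsetSum _ fun j _ => hterm i j]
  simp only [integral_const_mul, integral_mul_const]

end Integral

theorem Matrix.star_mulVec_dotProduct_mulVec {R m n : Type*} [CommSemiring R] [StarRing R]
    [Fintype m] [Fintype n] (N : Matrix m n R) (x : n → R) :
    star (N *ᵥ x) ⬝ᵥ N *ᵥ x = star x ⬝ᵥ (Nᴴ * N) *ᵥ x := by
  rw [← mulVec_mulVec, dotProduct_mulVec, star_mulVec, dotProduct_mulVec, dotProduct_mulVec]

theorem EuclideanSpace.ofReal_norm_sq_eq_star_dotProduct {ι : Type*} [Fintype ι] (w : ι → ℂ) :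
    ((‖(WithLp.equiv 2 (ι → ℂ)).symm w‖ ^ 2 : ℝ) : ℂ) = star w ⬝ᵥ w := by
  rw [dotProduct_comm, ← EuclideanSpace.inner_toLp_toLp]
  push_cast
  exact (inner_self_eq_norm_sq_to_K (E := EuclideanSpace ℂ ι) _).symm

theorem Matrix.ofReal_integral_norm_sq_mulVec {α m n : Type*} [MeasurableSpace α]
    {μ : Measure α} [Fintype m] [Fintype n] {N : α → Matrix m n ℂ}
    (hN : ∀ k l, Integrable (fun a => ((N a)ᴴ * N a) k l) μ) (x : n → ℂ) :
    ((∫ a, ‖(WithLp.equiv 2 (m → ℂ)).symm (N a *ᵥ x)‖ ^ 2 ∂μ : ℝ) : ℂ) =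
      star x ⬝ᵥ (of fun k l => ∫ a, ((N a)ᴴ * N a) k l ∂μ) *ᵥ x := by
  simp_rw [← integral_complex_ofReal, EuclideanSpace.ofReal_norm_sq_eq_star_dotProduct,
    star_mulVec_dotProduct_mulVec]
  exact integral_dotProduct_mulVec hN (star x) x

theorem Matrix.exp_ofReal_smul_conjTranspose {ι : Type*} [Fintype ι] [DecidableEq ι]
    (A : Matrix ι ι ℂ) (t : ℝ) :
    NormedSpace.exp ((t : ℂ) • Aᴴ) = (NormedSpace.exp ((t : ℂ) • A))ᴴ := by
  rw [← exp_conjTranspose, conjTranspose_smul, Complex.star_def, conj_ofReal]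

theorem Matrix.conjTranspose_mul_self_mul_exp_ofReal_smul {ι κ : Type*} [Fintype ι]
    [DecidableEq ι] [Fintype κ] (A : Matrix ι ι ℂ) (C : Matrix κ ι ℂ) (t : ℝ) :
    (C * NormedSpace.exp ((t : ℂ) • A))ᴴ * (C * NormedSpace.exp ((t : ℂ) • A)) =
      NormedSpace.exp ((t : ℂ) • Aᴴ) * (Cᴴ * C) * NormedSpace.exp ((t : ℂ) • A) := by
  rw [conjTranspose_mul, exp_ofReal_smul_conjTranspose]
  simp only [Matrix.mul_assoc]

theorem Complex.re_star_add_neg {ι : Type*} {lam : ι → ℂ} (hlam : ∀ i, (lam i).re < 0)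
    (i j : ι) : (star (lam i) + lam j).re < 0 := by
  simpa [Complex.star_def] using add_neg (hlam i) (hlam j)

section Diagonalizable

variable {ι : Type*} [Fintype ι] [DecidableEq ι] {U V : Matrix ι ι ℂ}

theorem Matrix.exp_smul_conj_diagonal (hUV : U * V = 1) (hVU : V * U = 1) (lam : ι → ℂ)
    (s : ℂ) :
    NormedSpace.exp (s • (U * diagonal lam * V)) =
      U * diagonal (fun i => cexp (s * lam i)) * V := by
  rw [← Matrix.smul_mul, ← Matrix.mul_smul, ← diagonal_smul]
  have h := Matrix.exp_units_conj ⟨U, V, hUV, hVU⟩ (diagonal (s • lam))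
  simp only [Units.inv_mk, Units.val_mk] at h
  rw [h, exp_diagonal, Pi.exp_def]
  simp only [Pi.smul_apply, smul_eq_mul, Complex.exp_eq_exp_ℂ]

theorem Matrix.exp_smul_conjTranspose_mul_mul_exp_smul (hUV : U * V = 1) (hVU : V * U = 1)
    (lam : ι → ℂ) (M : Matrix ι ι ℂ) (t : ℝ) :
    NormedSpace.exp ((t : ℂ) • (U * diagonal lam * V)ᴴ) * M *
        NormedSpace.exp ((t : ℂ) • (U * diagonal lam * V)) =
      Vᴴ * (of fun i j => (Uᴴ * M * U) i j * cexp ((star (lam i) + lam j) * t)) * V := by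
  have hdiag : star (fun i => cexp (t * lam i)) = fun i => cexp (t * star (lam i)) := by
    funext i
    rw [Pi.star_apply, Complex.star_def, ← Complex.exp_conj, map_mul, conj_ofReal]
  have hmid : diagonal (fun i => cexp (t * star (lam i))) * (Uᴴ * M * U) *
      diagonal (fun j => cexp (t * lam j)) =
        of fun i j => (Uᴴ * M * U) i j * cexp ((star (lam i) + lam j) * t) := by
    ext i j
    rw [mul_diagonal, diagonal_mul, of_apply, add_mul, Complex.exp_add, mul_comm (t : ℂ),
      mul_comm (t : ℂ)]
    ring
  rw [exp_ofReal_smul_conjTranspose, exp_smul_conj_diagonal hUV hVU, conjTranspose_mul,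
    conjTranspose_mul, diagonal_conjTranspose, hdiag, ← hmid]
  simp only [Matrix.mul_assoc]

/-- Entries with `star (lam i) + lam j = 0` are junk (`x / 0 = 0`). -/
noncomputable def Matrix.lyapunovSolution (U V : Matrix ι ι ℂ) (lam : ι → ℂ) (M : Matrix ι ι ℂ) :
    Matrix ι ι ℂ :=
  Vᴴ * (of fun i j => -(Uᴴ * M * U) i j / (star (lam i) + lam j)) * V

theorem Matrix.integrableOn_exp_smul_conjTranspose_mul_mul_exp_smul_apply (hUV : U * V = 1)
    (hVU : V * U = 1) {lam : ι → ℂ} (hlam : ∀ i, (lam i).re < 0) (M : Matrix ι ι ℂ) (k l : ι) :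
    IntegrableOn (fun t : ℝ => (NormedSpace.exp ((t : ℂ) • (U * diagonal lam * V)ᴴ) * M *
      NormedSpace.exp ((t : ℂ) • (U * diagonal lam * V))) k l) (Ioi 0) := by
  simp_rw [exp_smul_conjTranspose_mul_mul_exp_smul hUV hVU, mul_mul_apply Vᴴ]
  exact integrable_dotProduct_mulVec (fun i j =>
    (integrableOn_exp_mul_complex_Ioi (re_star_add_neg hlam i j) 0).const_mul _) _ _

theorem Matrix.integral_exp_smul_conjTranspose_mul_mul_exp_smul_eq_lyapunovSolution
    (hUV : U * V = 1) (hVU : V * U = 1) {lam : ι → ℂ} (hlam : ∀ i, (lam i).re < 0) (M : Matrix ι ι ℂ) :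
    (of fun k l => ∫ t in Ioi (0 : ℝ), (NormedSpace.exp ((t : ℂ) • (U * diagonal lam * V)ᴴ) *
      M * NormedSpace.exp ((t : ℂ) • (U * diagonal lam * V))) k l) =
      lyapunovSolution U V lam M := by
  have hint : ∀ i j, IntegrableOn (fun t : ℝ =>
      (of fun i j => (Uᴴ * M * U) i j * cexp ((star (lam i) + lam j) * t)) i j) (Ioi 0) :=
    fun i j => (integrableOn_exp_mul_complex_Ioi (re_star_add_neg hlam i j) 0).const_mul _
  ext k l
  simp only [of_apply, exp_smul_conjTranspose_mul_mul_exp_smul hUV hVU, mul_mul_apply Vᴴ]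
  rw [integral_dotProduct_mulVec hint, lyapunovSolution, mul_mul_apply]
  congr 2
  ext i j
  simp only [of_apply]
  rw [integral_const_mul, integral_exp_mul_complex_Ioi (re_star_add_neg hlam i j),
    ofReal_zero, mul_zero, Complex.exp_zero, neg_div, mul_neg, mul_div, mul_one, neg_div]

theorem Matrix.lyapunovSolution_spec (hUV : U * V = 1) (hVU : V * U = 1) {lam : ι → ℂ}
    (hlam : ∀ i j, star (lam i) + lam j ≠ 0) (M : Matrix ι ι ℂ) :
    (U * diagonal lam * V)ᴴ * lyapunovSolution U V lam M +
      lyapunovSolution U V lam M * (U * diagonal lam * V) = -M := by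
  set Q : Matrix ι ι ℂ := of fun i j => -(Uᴴ * M * U) i j / (star (lam i) + lam j)
  have hdiag : diagonal (star lam) * Q + Q * diagonal lam = -(Uᴴ * M * U) := by
    ext i j
    rw [add_apply, diagonal_mul, mul_diagonal, neg_apply, Pi.star_apply]
    simp only [Q, of_apply]
    have hij := hlam i j
    field_simp
    ring
  have hUVH : Uᴴ * Vᴴ = 1 := by rw [← conjTranspose_mul, hVU, conjTranspose_one]
  have hVUH : Vᴴ * Uᴴ = 1 := by rw [← conjTranspose_mul, hUV, conjTranspose_one]
  calc (U * diagonal lam * V)ᴴ * (Vᴴ * Q * V) + (Vᴴ * Q * V) * (U * diagonal lam * V)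
      = Vᴴ * (diagonal (star lam) * (Uᴴ * Vᴴ) * Q + Q * (V * U) * diagonal lam) * V := by
        simp only [conjTranspose_mul, diagonal_conjTranspose]; noncomm_ring
    _ = (Vᴴ * Uᴴ) * -M * (U * V) := by
        rw [hUVH, hVU, Matrix.mul_one, Matrix.mul_one, hdiag]; noncomm_ring
    _ = -M := by rw [hVUH, hUV, Matrix.one_mul, Matrix.mul_one]

end Diagonalizable

theorem gramian_integral_representation_general
    (n : ℕ)
    (A U V : Matrix (Fin n) (Fin n) ℂ) (lam : Fin n → ℂ)
    (hUV : U * V = 1) (hVU : V * U = 1)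
    (hA : A = U * Matrix.diagonal lam * V)
    (hHur : ∀ i, (lam i).re < 0)
    (m : ℕ) (C : Matrix (Fin m) (Fin n) ℂ) :
    (∀ k l, IntegrableOn
        (fun t : ℝ =>
          (NormedSpace.exp ((t : ℂ) • Aᴴ) * (Cᴴ * C) * NormedSpace.exp ((t : ℂ) • A)) k l)
        (Set.Ioi 0)) ∧
    Aᴴ * (Matrix.of fun k l => ∫ t in Set.Ioi (0 : ℝ),
          (NormedSpace.exp ((t : ℂ) • Aᴴ) * (Cᴴ * C) * NormedSpace.exp ((t : ℂ) • A)) k l) +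
      (Matrix.of fun k l => ∫ t in Set.Ioi (0 : ℝ),
          (NormedSpace.exp ((t : ℂ) • Aᴴ) * (Cᴴ * C) * NormedSpace.exp ((t : ℂ) • A)) k l) * A
      = -(Cᴴ * C) ∧
    ∀ x₀ : Fin n → ℂ,
      ((∫ t in Set.Ioi (0 : ℝ),
          ‖(WithLp.equiv 2 (Fin m → ℂ)).symm
            ((C * NormedSpace.exp ((t : ℂ) • A)).mulVec x₀)‖ ^ 2 : ℝ) : ℂ) =
        dotProduct (star x₀)
          ((Matrix.of fun k l => ∫ t in Set.Ioi (0 : ℝ),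
            (NormedSpace.exp ((t : ℂ) • Aᴴ) * (Cᴴ * C) *
              NormedSpace.exp ((t : ℂ) • A)) k l).mulVec x₀) := by
  subst hA
  have hint := integrableOn_exp_smul_conjTranspose_mul_mul_exp_smul_apply hUV hVU hHur (Cᴴ * C)
  refine ⟨hint, ?_, fun x₀ => ?_⟩
  · rw [integral_exp_smul_conjTranspose_mul_mul_exp_smul_eq_lyapunovSolution hUV hVU hHur]
    exact lyapunovSolution_spec hUV hVU
      (fun i j h => (re_star_add_neg hHur i j).ne (by rw [h, zero_re])) _
  · simp_rw [← conjTranspose_mul_self_mul_exp_ofReal_smul] at hint ⊢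
    exact ofReal_integral_norm_sq_mulVec hint x₀

/-- Integral representation of the Gramian and output energy: if `A` is Hurwitz and
`C ∈ ℂ^{m×n}`, then the integral `P := ∫₀^∞ exp(Aᴴt) Cᴴ C exp(At) dt` converges (entrywise),
`P` satisfies `Aᴴ P + P A = −Cᴴ C`, and for every `x₀ ∈ ℂⁿ`,
`∫₀^∞ ‖C exp(At) x₀‖² dt = x₀ᴴ P x₀` (Euclidean norm on `ℂ^m`). -/
theorem gramian_integral_representation
    (n : ℕ) (hn : 1 ≤ n)
    (A U V : Matrix (Fin n) (Fin n) ℂ) (lam : Fin n → ℂ)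
    (hUV : U * V = 1) (hVU : V * U = 1)
    (hA : A = U * Matrix.diagonal lam * V)
    (hHur : ∀ i, (lam i).re < 0)
    (m : ℕ) (C : Matrix (Fin m) (Fin n) ℂ) :
    (∀ k l, IntegrableOn
        (fun t : ℝ =>
          (NormedSpace.exp ((t : ℂ) • Aᴴ) * (Cᴴ * C) * NormedSpace.exp ((t : ℂ) • A)) k l)
        (Set.Ioi 0)) ∧
    Aᴴ * (Matrix.of fun k l => ∫ t in Set.Ioi (0 : ℝ),
          (NormedSpace.exp ((t : ℂ) • Aᴴ) * (Cᴴ * C) * NormedSpace.exp ((t : ℂ) • A)) k l) +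
      (Matrix.of fun k l => ∫ t in Set.Ioi (0 : ℝ),
          (NormedSpace.exp ((t : ℂ) • Aᴴ) * (Cᴴ * C) * NormedSpace.exp ((t : ℂ) • A)) k l) * A
      = -(Cᴴ * C) ∧
    ∀ x₀ : Fin n → ℂ,
      ((∫ t in Set.Ioi (0 : ℝ),
          ‖(WithLp.equiv 2 (Fin m → ℂ)).symm
            ((C * NormedSpace.exp ((t : ℂ) • A)).mulVec x₀)‖ ^ 2 : ℝ) : ℂ) =
        dotProduct (star x₀)
          ((Matrix.of fun k l => ∫ t in Set.Ioi (0 : ℝ),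
            (NormedSpace.exp ((t : ℂ) • Aᴴ) * (Cᴴ * C) *
              NormedSpace.exp ((t : ℂ) • A)) k l).mulVec x₀) :=
  gramian_integral_representation_general n A U V lam hUV hVU hA hHur m C
end

section
/- Proposition 1 (equality of modal contributions for conjugate eigenvalues): suppose A is Hurwitz and there is a permutation σ of {1,…,n} such that for every i: λ_{σ(i)} = conj(λ_i), u_{σ(i)} = conj(u_i) (entrywise), and v_{σ(i)} = conj(v_i) (entrywise). For each i define P̄_{z i} := −{ ∑_{j=1}^n ((u_iᴴ u_j)/(conj(λ_i) + λ_j)) e_i e_jᵀ }_H. Then for every real vector x ∈ ℝⁿ, with z := V x (viewing x as a complex vector with real entries), one has zᴴ P̄_{z σ(i)} z = zᴴ P̄_{z i} z for every i. -/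
/-!
Write `C` for the matrix of the coefficients `(u_iᴴ u_j) / (conj λ_i + λ_j)`. The quadratic form
of `P̄_{z i}` is `-Re (conj z_i * (C z)_i)`. The conjugation symmetry gives
`C_{σ i, σ j} = conj C_{i j}`, and for `z = V x` with `x` real also `z_{σ j} = conj z_j`, so the
`σ i`-term is the complex conjugate of the `i`-term and has the same real part.
-/

open Matrix BigOperators

/-- The modal-contribution matrix
`P̄_{z i} := −{ ∑_j ((u_iᴴ u_j)/(conj(λ_i) + λ_j)) e_i e_jᵀ }_H`. -/
noncomputable def modalContrib {n : ℕ} (U : Matrix (Fin n) (Fin n) ℂ) (lam : Fin n → ℂ)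
    (i : Fin n) : Matrix (Fin n) (Fin n) ℂ :=
  -hermPart (∑ j, Matrix.single i j
    ((∑ k, starRingEnd ℂ (U k i) * U k j) / (starRingEnd ℂ (lam i) + lam j)))

open ComplexConjugate

section QuadraticForms

variable {ι : Type*} [Fintype ι]

lemma star_dotProduct_conjTranspose_mulVec (M : Matrix ι ι ℂ) (z : ι → ℂ) :
    star z ⬝ᵥ (Mᴴ *ᵥ z) = conj (star z ⬝ᵥ (M *ᵥ z)) := by
  rw [dotProduct_mulVec, ← star_mulVec, star_dotProduct, dotProduct_comm]
  rfl

lemma star_dotProduct_sum_single_mulVec [DecidableEq ι] (M : Matrix ι ι ℂ) (z : ι → ℂ)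
    (i : ι) : star z ⬝ᵥ ((∑ j, single i j (M i j)) *ᵥ z) = conj (z i) * (M *ᵥ z) i := by
  simp only [sum_mulVec, single_mulVec_eq, ← Finset.sum_smul, dotProduct_smul,
    dotProduct_single]
  simp [mulVec, dotProduct, mul_comm]

lemma mulVec_apply_perm_eq_conj {σ τ : Equiv.Perm ι} {M : Matrix ι ι ℂ} {w : ι → ℂ}
    (hM : ∀ i j, M (σ i) (τ j) = conj (M i j)) (hw : ∀ j, w (τ j) = conj (w j)) (i : ι) :
    (M *ᵥ w) (σ i) = conj ((M *ᵥ w) i) := by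
  simp only [mulVec, dotProduct, map_sum, map_mul]
  rw [← Equiv.sum_comp τ]
  simp only [hM, hw]

end QuadraticForms

section ModalContrib

variable {n : ℕ}

lemma star_dotProduct_hermPart_mulVec (M : Matrix (Fin n) (Fin n) ℂ) (z : Fin n → ℂ) :
    star z ⬝ᵥ (hermPart M *ᵥ z) = ((star z ⬝ᵥ (M *ᵥ z)).re : ℂ) := by
  rw [hermPart, smul_mulVec, add_mulVec, dotProduct_smul, dotProduct_add,
    star_dotProduct_conjTranspose_mulVec, Complex.add_conj]
  simp

variable (U : Matrix (Fin n) (Fin n) ℂ) (lam : Fin n → ℂ)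

noncomputable def modalCoeff : Matrix (Fin n) (Fin n) ℂ :=
  of fun i j => (Uᴴ * U) i j / (conj (lam i) + lam j)

lemma star_dotProduct_modalContrib_mulVec (z : Fin n → ℂ) (i : Fin n) :
    star z ⬝ᵥ (modalContrib U lam i *ᵥ z) =
      -((conj (z i) * (modalCoeff U lam *ᵥ z) i).re : ℂ) := by
  rw [modalContrib, neg_mulVec, dotProduct_neg, ← star_dotProduct_sum_single_mulVec,
    ← star_dotProduct_hermPart_mulVec]
  rfl

variable {U lam}

lemma modalCoeff_perm_eq_conj {σ : Equiv.Perm (Fin n)}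
    (hσlam : ∀ i, lam (σ i) = conj (lam i)) (hσU : ∀ i k, U k (σ i) = conj (U k i))
    (i j : Fin n) :
    modalCoeff U lam (σ i) (σ j) = conj (modalCoeff U lam i j) := by
  simp [modalCoeff, mul_apply, hσlam, hσU, map_sum]

end ModalContrib

theorem modal_contributions_conjugate_pair_equal_general
    (n : ℕ)
    (U V : Matrix (Fin n) (Fin n) ℂ) (lam : Fin n → ℂ)
    (σ : Equiv.Perm (Fin n))
    (hσlam : ∀ i, lam (σ i) = starRingEnd ℂ (lam i))
    (hσU : ∀ i k, U k (σ i) = starRingEnd ℂ (U k i))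
    (hσV : ∀ i k, V (σ i) k = starRingEnd ℂ (V i k)) :
    ∀ (x : Fin n → ℝ) (i : Fin n),
      dotProduct (star (V.mulVec fun k => (x k : ℂ)))
          ((modalContrib U lam (σ i)).mulVec (V.mulVec fun k => (x k : ℂ))) =
        dotProduct (star (V.mulVec fun k => (x k : ℂ)))
          ((modalContrib U lam i).mulVec (V.mulVec fun k => (x k : ℂ))) := by
  intro x i
  set z : Fin n → ℂ := V *ᵥ fun k => (x k : ℂ)
  have hz : ∀ j, z (σ j) = conj (z j) :=
    mulVec_apply_perm_eq_conj (τ := Equiv.refl _) hσV fun k => (Complex.conj_ofReal _).symm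
  rw [star_dotProduct_modalContrib_mulVec, star_dotProduct_modalContrib_mulVec, hz,
    mulVec_apply_perm_eq_conj (modalCoeff_perm_eq_conj hσlam hσU) hz, ← map_mul,
    Complex.conj_re]

/-- Proposition 1: equality of modal contributions for conjugate eigenvalues. If `A` is
Hurwitz and `σ` is a permutation with `λ_{σ(i)} = conj(λ_i)`, `u_{σ(i)} = conj(u_i)`,
`v_{σ(i)} = conj(v_i)`, then for every real vector `x`, with `z := V x`,
`zᴴ P̄_{z σ(i)} z = zᴴ P̄_{z i} z` for every `i`. -/
theorem modal_contributions_conjugate_pair_equal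
    (n : ℕ) (hn : 1 ≤ n)
    (A U V : Matrix (Fin n) (Fin n) ℂ) (lam : Fin n → ℂ)
    (hUV : U * V = 1) (hVU : V * U = 1)
    (hA : A = U * Matrix.diagonal lam * V)
    (hHur : ∀ i, (lam i).re < 0)
    (σ : Equiv.Perm (Fin n))
    (hσlam : ∀ i, lam (σ i) = starRingEnd ℂ (lam i))
    (hσU : ∀ i k, U k (σ i) = starRingEnd ℂ (U k i))
    (hσV : ∀ i k, V (σ i) k = starRingEnd ℂ (V i k)) :
    ∀ (x : Fin n → ℝ) (i : Fin n),
      dotProduct (star (V.mulVec fun k => (x k : ℂ)))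
          ((modalContrib U lam (σ i)).mulVec (V.mulVec fun k => (x k : ℂ))) =
        dotProduct (star (V.mulVec fun k => (x k : ℂ)))
          ((modalContrib U lam i).mulVec (V.mulVec fun k => (x k : ℂ))) :=
  modal_contributions_conjugate_pair_equal_general n U V lam σ hσlam hσU hσV
end

section
/- Proposition 2, first formula (averaged modal contribution): if A is Hurwitz, then for each i, trace(Vᴴ P̄_{z i} V) = −Re( trace( R_iᴴ (conj(λ_i)I + A)⁻¹ ) ), where P̄_{z i} := −{ ∑_{j=1}^n ((u_iᴴ u_j)/(conj(λ_i) + λ_j)) e_i e_jᵀ }_H. -/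
open Matrix BigOperators

/-!
With `μ_j = conj(λ_i) + λ_j`, the matrix inside `P̄_{z i}` is `e_i e_iᵀ Uᴴ U diag(μ)⁻¹`, so
conjugating it by `V` gives `(U e_i e_iᵀ V)ᴴ (U diag(μ) V)⁻¹ = R_iᴴ (conj(λ_i) I + A)⁻¹`.
Conjugation by `V` commutes with taking Hermitian parts, and the trace of a Hermitian part is
the real part of the trace. The Hurwitz condition makes every `μ_j` nonzero.
-/

namespace Matrix

variable {ι K : Type*} [Fintype ι] [DecidableEq ι]

theorem smul_one_add_mul_diagonal_mul [CommRing K] {U V : Matrix ι ι K} (hUV : U * V = 1)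
    (s : K) (d : ι → K) :
    s • (1 : Matrix ι ι K) + U * diagonal d * V = U * diagonal (fun j => s + d j) * V := by
  rw [show diagonal (fun j => s + d j) = s • 1 + diagonal d by
    rw [smul_one_eq_diagonal, diagonal_add]]
  rw [Matrix.mul_add, Matrix.add_mul, Matrix.mul_smul, Matrix.mul_one, Matrix.smul_mul, hUV]

theorem inv_mul_diagonal_mul [Field K] {U V : Matrix ι ι K} (hUV : U * V = 1) {d : ι → K}
    (hd : ∀ j, d j ≠ 0) :
    (U * diagonal d * V)⁻¹ = U * diagonal (fun j => (d j)⁻¹) * V := by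
  refine inv_eq_left_inv ?_
  calc U * diagonal (fun j => (d j)⁻¹) * V * (U * diagonal d * V)
      = U * (diagonal (fun j => (d j)⁻¹) * (V * U) * diagonal d) * V := by
        simp only [Matrix.mul_assoc]
    _ = 1 := by
        rw [mul_eq_one_comm.mp hUV, Matrix.mul_one, diagonal_mul_diagonal]
        simp [inv_mul_cancel₀ (hd _), hUV]

theorem sum_single_mul_eq_single_one_mul_mul_diagonal [Semiring K] (M : Matrix ι ι K)
    (d : ι → K) (i : ι) :
    ∑ j, single i j (M i j * d j) = single i i 1 * M * diagonal d := by
  ext k l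
  simp [sum_apply, single_apply, mul_apply, diagonal_apply, ite_and]

end Matrix

open Matrix

theorem residue_eq_mul_single_mul {n : ℕ} (U V : Matrix (Fin n) (Fin n) ℂ) (i : Fin n) :
    residue U V i = U * single i i 1 * V := by
  ext k l
  simp [residue, vecMulVec_apply, mul_apply, single_apply, ite_and]

theorem modalContrib_eq {n : ℕ} (U : Matrix (Fin n) (Fin n) ℂ) (lam : Fin n → ℂ) (i : Fin n) :
    modalContrib U lam i = -hermPart (single i i 1 * (Uᴴ * U) *
      diagonal (fun j => (starRingEnd ℂ (lam i) + lam j)⁻¹)) := by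
  rw [modalContrib, ← sum_single_mul_eq_single_one_mul_mul_diagonal (Uᴴ * U)]
  simp only [mul_apply, conjTranspose_apply, div_eq_mul_inv, RCLike.star_def]

theorem trace_conjTranspose_mul_hermPart_mul {n : ℕ} (M V : Matrix (Fin n) (Fin n) ℂ) :
    trace (Vᴴ * hermPart M * V) = ((trace (Vᴴ * M * V)).re : ℂ) := by
  have hstar : trace (Vᴴ * Mᴴ * V) = star (trace (Vᴴ * M * V)) := by
    rw [← trace_conjTranspose, conjTranspose_mul, conjTranspose_mul, conjTranspose_conjTranspose,
      Matrix.mul_assoc]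
  rw [hermPart, Matrix.mul_smul, Matrix.smul_mul, trace_smul, Matrix.mul_add, Matrix.add_mul,
    trace_add, hstar, RCLike.star_def, Complex.add_conj, smul_eq_mul]
  push_cast
  ring

theorem averaged_modal_contribution_formula_general
    (n : ℕ)
    (A U V : Matrix (Fin n) (Fin n) ℂ) (lam : Fin n → ℂ)
    (hUV : U * V = 1)
    (hA : A = U * Matrix.diagonal lam * V)
    (hHur : ∀ i, (lam i).re < 0)
    (i : Fin n) :
    Matrix.trace (Vᴴ * modalContrib U lam i * V) =
      -((Matrix.trace ((residue U V i)ᴴ *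
          (starRingEnd ℂ (lam i) • (1 : Matrix (Fin n) (Fin n) ℂ) + A)⁻¹)).re : ℂ) := by
  have hshift : ∀ j, starRingEnd ℂ (lam i) + lam j ≠ 0 := fun j h => by
    have := congrArg Complex.re h
    simp only [Complex.add_re, Complex.conj_re, Complex.zero_re] at this
    linarith [hHur i, hHur j]
  rw [modalContrib_eq, Matrix.mul_neg, Matrix.neg_mul, trace_neg,
    trace_conjTranspose_mul_hermPart_mul, hA, smul_one_add_mul_diagonal_mul hUV,
    inv_mul_diagonal_mul hUV hshift, residue_eq_mul_single_mul]
  simp only [conjTranspose_mul, conjTranspose_single, star_one, Matrix.mul_assoc]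

/-- Proposition 2, first formula (averaged modal contribution): if `A` is Hurwitz, then for
each `i`, `trace(Vᴴ P̄_{z i} V) = −Re(trace(R_iᴴ (conj(λ_i)I + A)⁻¹))`. -/
theorem averaged_modal_contribution_formula
    (n : ℕ) (hn : 1 ≤ n)
    (A U V : Matrix (Fin n) (Fin n) ℂ) (lam : Fin n → ℂ)
    (hUV : U * V = 1) (hVU : V * U = 1)
    (hA : A = U * Matrix.diagonal lam * V)
    (hHur : ∀ i, (lam i).re < 0)
    (i : Fin n) :
    Matrix.trace (Vᴴ * modalContrib U lam i * V) =
      -((Matrix.trace ((residue U V i)ᴴ *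
          (starRingEnd ℂ (lam i) • (1 : Matrix (Fin n) (Fin n) ℂ) + A)⁻¹)).re : ℂ) :=
  averaged_modal_contribution_formula_general n A U V lam hUV hA hHur i
end

section
/- Quantitative bounds underlying Property 2 (stability-boundary behavior of Lyapunov participation factors): suppose A is Hurwitz and let P_{x_k ij} := −½ { conj(v_i) conj(u_i^k) u_j^k v_jᵀ/(conj(λ_i) + λ_j) + v_i u_i^k u_j^k v_jᵀ/(λ_i + λ_j) }_H and p_{ki} := u_i^k v_i^k. Then: (a) if λ_i is real and p_{ki} is real, the (k,k) entry of P_{x_k ii} equals p_{ki}²/(−2λ_i); and (b) for all i, j, the absolute value of the (k,k) entry of P_{x_k ij} is at most |p_{ki}| |p_{kj}| / ( −Re(λ_i) − Re(λ_j) ). -/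
open Matrix BigOperators

/-- The pairwise sub-Gramian of the `k`-th state associated with the `i`-th and `j`-th
modes, `P_{x_k ij} := −½ { conj(v_i) conj(u_i^k) u_j^k v_jᵀ/(conj(λ_i)+λ_j)
+ v_i u_i^k u_j^k v_jᵀ/(λ_i+λ_j) }_H`. -/
noncomputable def pairStateSubGramian {n : ℕ} (U V : Matrix (Fin n) (Fin n) ℂ)
    (lam : Fin n → ℂ) (k i j : Fin n) : Matrix (Fin n) (Fin n) ℂ :=
  -((1 / 2 : ℂ) • hermPart
      ((starRingEnd ℂ (lam i) + lam j)⁻¹ •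
          Matrix.vecMulVec (fun a => starRingEnd ℂ (V i a))
            (fun b => starRingEnd ℂ (U k i) * U k j * V j b) +
        (lam i + lam j)⁻¹ •
          Matrix.vecMulVec (fun a => V i a)
            (fun b => U k i * U k j * V j b)))

/-
The `(k,k)` entry of `P_{x_k ij}` is `-(z + conj z)/4`, where `z` is the sum of the two scalar
terms `conj p_{ki} p_{kj} / (conj λ_i + λ_j)` and `p_{ki} p_{kj} / (λ_i + λ_j)`. For real data
`z = p_{ki}² / λ_i`, which gives (a). For (b), both denominators have real part
`Re λ_i + Re λ_j < 0`, so each term has modulus at most `|p_{ki}| |p_{kj}| / (-Re λ_i - Re λ_j)`.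
-/

open ComplexConjugate

noncomputable def lyapunovPairTerm (lam mu p q : ℂ) : ℂ :=
  conj p * q / (conj lam + mu) + p * q / (lam + mu)

lemma hermPart_apply {n : ℕ} (M : Matrix (Fin n) (Fin n) ℂ) (a b : Fin n) :
    hermPart M a b = (M a b + conj (M b a)) / 2 := by
  simp only [hermPart, Matrix.smul_apply, Matrix.add_apply, conjTranspose_apply,
    Complex.star_def, smul_eq_mul]
  ring

lemma pairStateSubGramian_apply_self_self {n : ℕ} (U V : Matrix (Fin n) (Fin n) ℂ)
    (lam : Fin n → ℂ) (k i j : Fin n) :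
    pairStateSubGramian U V lam k i j k k =
      -(lyapunovPairTerm (lam i) (lam j) (U k i * V i k) (U k j * V j k) +
          conj (lyapunovPairTerm (lam i) (lam j) (U k i * V i k) (U k j * V j k))) / 4 := by
  simp only [pairStateSubGramian, lyapunovPairTerm, hermPart_apply, Matrix.neg_apply,
    Matrix.smul_apply, Matrix.add_apply, vecMulVec_apply, smul_eq_mul, map_add, map_mul, map_div₀, map_inv₀,
    Complex.conj_conj]
  ring

lemma lyapunovPairTerm_self_of_im_eq_zero {lam p : ℂ} (hlam : lam.im = 0) (hp : p.im = 0) :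
    lyapunovPairTerm lam lam p p = p ^ 2 / lam := by
  rw [lyapunovPairTerm, Complex.conj_eq_iff_im.2 hlam, Complex.conj_eq_iff_im.2 hp]
  ring

lemma Complex.norm_div_le_div_abs_re (w : ℂ) {d : ℂ} (hd : d.re ≠ 0) :
    ‖w / d‖ ≤ ‖w‖ / |d.re| := by
  rw [norm_div]
  exact div_le_div_of_nonneg_left (norm_nonneg w) (abs_pos.2 hd) (Complex.abs_re_le_norm d)

lemma norm_lyapunovPairTerm_le {lam mu : ℂ} (hlam : lam.re < 0) (hmu : mu.re < 0) (p q : ℂ) :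
    ‖lyapunovPairTerm lam mu p q‖ ≤ 2 * (‖p‖ * ‖q‖ / (-lam.re - mu.re)) := by
  have hsum : |lam.re + mu.re| = -lam.re - mu.re := by rw [abs_of_neg (by linarith)]; ring
  have hre : (lam + mu).re ≠ 0 := by rw [Complex.add_re]; linarith
  have hre' : (conj lam + mu).re ≠ 0 := by rw [Complex.add_re, Complex.conj_re]; linarith
  calc ‖lyapunovPairTerm lam mu p q‖
      ≤ ‖conj p * q‖ / |(conj lam + mu).re| + ‖p * q‖ / |(lam + mu).re| :=
        (norm_add_le _ _).trans (add_le_add (Complex.norm_div_le_div_abs_re _ hre')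
          (Complex.norm_div_le_div_abs_re _ hre))
    _ = 2 * (‖p‖ * ‖q‖ / (-lam.re - mu.re)) := by
        simp only [norm_mul, Complex.norm_conj, Complex.add_re, Complex.conj_re, hsum]
        ring

lemma norm_neg_add_conj_div_four_le (z : ℂ) : ‖-(z + conj z) / 4‖ ≤ ‖z‖ / 2 := by
  rw [norm_div, norm_neg, Complex.norm_ofNat]
  linarith [norm_add_le z (conj z), Complex.norm_conj z]

theorem lyapunov_pf_stability_boundary_bounds_general
    (n : ℕ)
    (U V : Matrix (Fin n) (Fin n) ℂ) (lam : Fin n → ℂ)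
    (hHur : ∀ i, (lam i).re < 0)
    (k : Fin n) :
    (∀ i, (lam i).im = 0 → (U k i * V i k).im = 0 →
        pairStateSubGramian U V lam k i i k k =
          (U k i * V i k) ^ 2 / (-(2 : ℂ) * lam i)) ∧
    (∀ i j,
        ‖pairStateSubGramian U V lam k i j k k‖ ≤
          ‖U k i * V i k‖ * ‖U k j * V j k‖ /
            (-(lam i).re - (lam j).re)) := by
  refine ⟨fun i hlam hp => ?_, fun i j => ?_⟩
  · rw [pairStateSubGramian_apply_self_self, lyapunovPairTerm_self_of_im_eq_zero hlam hp,
      map_div₀, map_pow, Complex.conj_eq_iff_im.2 hlam, Complex.conj_eq_iff_im.2 hp]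
    ring
  · rw [pairStateSubGramian_apply_self_self]
    linarith [norm_neg_add_conj_div_four_le
        (lyapunovPairTerm (lam i) (lam j) (U k i * V i k) (U k j * V j k)),
      norm_lyapunovPairTerm_le (hHur i) (hHur j) (U k i * V i k) (U k j * V j k)]

/-- Quantitative bounds underlying Property 2: with `p_{ki} := u_i^k v_i^k`,
(a) if `λ_i` and `p_{ki}` are real, the `(k,k)` entry of `P_{x_k ii}` equals
`p_{ki}²/(−2λ_i)`; (b) for all `i, j`, the absolute value of the `(k,k)` entry of
`P_{x_k ij}` is at most `|p_{ki}| |p_{kj}| / (−Re(λ_i) − Re(λ_j))`. -/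
theorem lyapunov_pf_stability_boundary_bounds
    (n : ℕ) (hn : 1 ≤ n)
    (A U V : Matrix (Fin n) (Fin n) ℂ) (lam : Fin n → ℂ)
    (hUV : U * V = 1) (hVU : V * U = 1)
    (hA : A = U * Matrix.diagonal lam * V)
    (hHur : ∀ i, (lam i).re < 0)
    (k : Fin n) :
    (∀ i, (lam i).im = 0 → (U k i * V i k).im = 0 →
        pairStateSubGramian U V lam k i i k k =
          (U k i * V i k) ^ 2 / (-(2 : ℂ) * lam i)) ∧
    (∀ i j,
        ‖pairStateSubGramian U V lam k i j k k‖ ≤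
          ‖U k i * V i k‖ * ‖U k j * V j k‖ /
            (-(lam i).re - (lam j).re)) :=
  lyapunov_pf_stability_boundary_bounds_general n U V lam hHur k
end
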